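/- arXiv:2506.18433 — 3 statements merged into one kernel-verified Lean document; each statement's English description precedes it below -/
import Mathlib

section
/- Let m ≥ 2 be an integer and Δ = 2 − 2cos(π/m). Then the sawtooth map L_Δ has no escaping orbits: for every (R, φ) ∈ ℝ × (ℝ/ℤ), it is not the case that the first coordinate of L_Δ^[n](R, φ) tends to +∞ as n → ∞. -/
open MeasureTheory Filter

noncomputable section

/-- The cylinder `ℝ × (ℝ/ℤ)`. -/
abbrev Cyl := ℝ × AddCircle (1 : ℝ)

/-- The representative in `[0, 1)` of an element of `ℝ/ℤ`. -/
def rep (t : AddCircle (1 : ℝ)) : ℝ := (AddCircle.equivIco 1 0 t : ℝ)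

/-- The sawtooth map `L_Δ(R, φ) = (R + Δ((φ − R)₀ − 1/2), φ − R)` on the cylinder. -/
def sawtooth (Δ : ℝ) : Cyl → Cyl := fun p =>
  (p.1 + Δ * (rep (p.2 - (p.1 : AddCircle (1 : ℝ))) - 1 / 2),
    p.2 - (p.1 : AddCircle (1 : ℝ)))

namespace SawtoothAux

lemma rep_mem (t : AddCircle (1:ℝ)) : rep t ∈ Set.Ico (0:ℝ) 1 := by
  have h := (AddCircle.equivIco 1 0 t).2
  simpa [rep] using h

lemma rep_coe (t : AddCircle (1:ℝ)) : ((rep t : ℝ) : AddCircle (1:ℝ)) = t := by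
  change ((AddCircle.equivIco 1 0).symm (AddCircle.equivIco 1 0 t)) = t
  exact (AddCircle.equivIco 1 0).symm_apply_apply t

/-- `Sf m j = sin (j π / m)`. -/
noncomputable def Sf (m j : ℕ) : ℝ := Real.sin (j * (Real.pi / m))

lemma sin_add_le {A B : ℝ} (hA : 0 ≤ Real.sin A) (hB : 0 ≤ Real.sin B) :
    Real.sin (A + B) ≤ Real.sin A + Real.sin B := by
  rw [Real.sin_add]
  nlinarith [Real.cos_le_one B, Real.cos_le_one A, Real.neg_one_le_cos B, Real.neg_one_le_cos A]

section trig

variable {m : ℕ} (hm : 2 ≤ m)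

lemma theta_pos (hm : 2 ≤ m) : 0 < Real.pi / m := by
  have : (0:ℝ) < m := by exact_mod_cast (by omega : 0 < m)
  exact div_pos Real.pi_pos this

lemma theta_mul (hm : 2 ≤ m) : (m : ℝ) * (Real.pi / m) = Real.pi := by
  have : (m:ℝ) ≠ 0 := by positivity
  field_simp

lemma Sf_nonneg (hm : 2 ≤ m) {j : ℕ} (hj : j ≤ m) : 0 ≤ Sf m j := by
  apply Real.sin_nonneg_of_nonneg_of_le_pi
  · positivity
  · have hj' : (j:ℝ) ≤ m := by exact_mod_cast hj
    have h1 : (j:ℝ) * (Real.pi / m) ≤ (m:ℝ) * (Real.pi / m) :=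
      mul_le_mul_of_nonneg_right hj' (theta_pos hm).le
    linarith [theta_mul hm]

lemma Sf_pos (hm : 2 ≤ m) {j : ℕ} (hj0 : 0 < j) (hj : j < m) : 0 < Sf m j := by
  apply Real.sin_pos_of_pos_of_lt_pi
  · have h1 := theta_pos hm
    have h2 : (0:ℝ) < j := by exact_mod_cast hj0
    positivity
  · have hlt : (j:ℝ) < m := by exact_mod_cast hj
    have h1 : (j:ℝ) * (Real.pi / m) < (m:ℝ) * (Real.pi / m) :=
      mul_lt_mul_of_pos_right hlt (theta_pos hm)
    linarith [theta_mul hm]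

lemma Sf_zero (m : ℕ) : Sf m 0 = 0 := by simp [Sf]

lemma Sf_rec (m : ℕ) (j : ℕ) :
    Sf m (j+2) = 2 * Real.cos (Real.pi / m) * Sf m (j+1) - Sf m j := by
  unfold Sf
  have h1 : ((j:ℝ)+2) * (Real.pi / m) = ((j:ℝ)+1) * (Real.pi / m) + (Real.pi / m) := by ring
  have h2 : (j:ℝ) * (Real.pi / m) = ((j:ℝ)+1) * (Real.pi / m) - (Real.pi / m) := by ring
  push_cast
  rw [h1, h2, Real.sin_add, Real.sin_sub]
  ring

lemma Sf_m_eq (hm : 2 ≤ m) : Sf m m = 0 := by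
  unfold Sf
  rw [theta_mul hm, Real.sin_pi]

lemma Sf_pred (hm : 2 ≤ m) {j : ℕ} (hj : j + 2 = m) : Sf m (j+1) = Sf m 1 := by
  unfold Sf
  have h : ((j:ℝ)+1) * (Real.pi / m) = Real.pi - (((m:ℝ) - j - 1) * (Real.pi / m)) := by
    rw [sub_mul, sub_mul, theta_mul hm]; ring
  have h2 : ((m:ℝ) - j - 1) = 1 := by
    have : (m:ℝ) = (j:ℝ) + 2 := by exact_mod_cast hj.symm
    rw [this]; ring
  push_cast
  rw [h, h2, Real.sin_pi_sub, one_mul]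

-- sin((j+2)θ) ≤ sin((j+1)θ) + sin θ   for j+2 ≤ m
lemma Sf_ineq_a (hm : 2 ≤ m) {j : ℕ} (hj : j + 2 ≤ m) :
    Sf m (j+2) ≤ Sf m (j+1) + Sf m 1 := by
  unfold Sf
  have h : ((j:ℝ)+2) * (Real.pi / m) = ((j:ℝ)+1) * (Real.pi / m) + 1 * (Real.pi / m) := by ring
  push_cast
  rw [h]
  exact sin_add_le
    (by have := Sf_nonneg hm (j := j+1) (by omega); unfold Sf at this; push_cast at this ⊢; exact this)
    (by have := Sf_nonneg hm (j := 1) (by omega); unfold Sf at this; push_cast at this ⊢; exact this)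

-- sin((j+1)θ) ≤ sin((j+2)θ) + sin θ   for j+2 ≤ m
lemma Sf_ineq_b (hm : 2 ≤ m) {j : ℕ} (hj : j + 2 ≤ m) :
    Sf m (j+1) ≤ Sf m (j+2) + Sf m 1 := by
  have h1 : 0 ≤ Real.sin (Real.pi - ((j:ℝ)+2) * (Real.pi / m)) := by
    rw [Real.sin_pi_sub]
    have := Sf_nonneg hm (j := j+2) hj
    unfold Sf at this; push_cast at this; exact this
  have h2 : 0 ≤ Real.sin ((1:ℝ) * (Real.pi / m)) := by
    have := Sf_nonneg hm (j := 1) (by omega)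
    unfold Sf at this; push_cast at this; exact this
  have h := sin_add_le h1 h2
  have e : Real.pi - ((j:ℝ)+2) * (Real.pi / m) + (1:ℝ) * (Real.pi / m)
      = Real.pi - ((j:ℝ)+1) * (Real.pi / m) := by ring
  rw [e, Real.sin_pi_sub, Real.sin_pi_sub] at h
  unfold Sf
  push_cast
  linarith [h]

-- sin((j+1)θ) ≤ sin(jθ) + sin θ   for j+1 ≤ m
lemma Sf_ineq_c (hm : 2 ≤ m) {j : ℕ} (hj : j + 1 ≤ m) :
    Sf m (j+1) ≤ Sf m j + Sf m 1 := by
  unfold Sf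
  have h : ((j:ℝ)+1) * (Real.pi / m) = (j:ℝ) * (Real.pi / m) + 1 * (Real.pi / m) := by ring
  push_cast
  rw [h]
  exact sin_add_le
    (by have := Sf_nonneg hm (j := j) (by omega); unfold Sf at this; push_cast at this ⊢; exact this)
    (by have := Sf_nonneg hm (j := 1) (by omega); unfold Sf at this; push_cast at this ⊢; exact this)

-- sin(jθ) ≤ sin((j+1)θ) + sin θ   for j+1 ≤ m
lemma Sf_ineq_d (hm : 2 ≤ m) {j : ℕ} (hj : j + 1 ≤ m) :
    Sf m j ≤ Sf m (j+1) + Sf m 1 := by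
  have h1 : 0 ≤ Real.sin (Real.pi - ((j:ℝ)+1) * (Real.pi / m)) := by
    rw [Real.sin_pi_sub]
    have := Sf_nonneg hm (j := j+1) hj
    unfold Sf at this; push_cast at this; exact this
  have h2 : 0 ≤ Real.sin ((1:ℝ) * (Real.pi / m)) := by
    have := Sf_nonneg hm (j := 1) (by omega)
    unfold Sf at this; push_cast at this; exact this
  have h := sin_add_le h1 h2
  have e : Real.pi - ((j:ℝ)+1) * (Real.pi / m) + (1:ℝ) * (Real.pi / m)
      = Real.pi - (j:ℝ) * (Real.pi / m) := by ring
  rw [e, Real.sin_pi_sub, Real.sin_pi_sub] at h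
  unfold Sf
  push_cast
  linarith [h]

end trig

/-- bound: |(S_{j+1} - S_j)(x - 1/2)| ≤ S₁/2 for x ∈ [0,1]. -/
lemma affine_bound {m : ℕ} (hm : 2 ≤ m) {j : ℕ} (hj : j + 1 ≤ m) {x : ℝ}
    (hx0 : 0 ≤ x) (hx1 : x ≤ 1) :
    |(Sf m (j+1) - Sf m j) * (x - 1/2)| ≤ Sf m 1 / 2 := by
  have h1 := Sf_ineq_c hm hj
  have h2 := Sf_ineq_d hm hj
  have habs : |Sf m (j+1) - Sf m j| ≤ Sf m 1 := abs_sub_le_iff.mpr ⟨by linarith, by linarith⟩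
  have hx : |x - 1/2| ≤ 1/2 := abs_le.mpr ⟨by linarith, by linarith⟩
  calc |(Sf m (j+1) - Sf m j) * (x - 1/2)| = |Sf m (j+1) - Sf m j| * |x - 1/2| := abs_mul _ _
    _ ≤ Sf m 1 * (1/2) := by
        apply mul_le_mul habs hx (abs_nonneg _)
        exact Sf_nonneg hm (by omega)
    _ = Sf m 1 / 2 := by ring

/-- Core fact: for x' ∈ [0,1], the "no jump over the top of the polygon" inequality
    -S_{j+1} Δ (x'-1/2) + (S_{j+1}-S_j)(x'-1/2) ≥ -S₁/2. -/
lemma slope_bound {m : ℕ} (hm : 2 ≤ m) {j : ℕ} (hj : j < m - 1) {x' : ℝ}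
    (hx0 : 0 ≤ x') (hx1 : x' ≤ 1) :
    -(Sf m 1)/2 ≤ -(Sf m (j+1)) * ((2 - 2 * Real.cos (Real.pi / m)) * (x' - 1/2))
      + (Sf m (j+1) - Sf m j) * (x' - 1/2) := by
  have hj2 : j + 2 ≤ m := by omega
  have hrec := Sf_rec m j
  have ha := Sf_ineq_a hm hj2
  have hb := Sf_ineq_b hm hj2
  -- endpoint values: at x'=1 need Δ S_{j+1} ≤ S₁ + S_{j+1} - S_j, i.e. S_{j+1} ≤ S_{j+2} + S₁
  -- at x'=0 need S_{j+1} - S_j - Δ S_{j+1} ≤ S₁, i.e. S_{j+2} ≤ S_{j+1} + S₁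
  have E1 : (2 - 2 * Real.cos (Real.pi / m)) * Sf m (j+1) ≤ Sf m 1 + Sf m (j+1) - Sf m j := by
    nlinarith [hrec, hb]
  have E0 : Sf m (j+1) - Sf m j - (2 - 2 * Real.cos (Real.pi / m)) * Sf m (j+1) ≤ Sf m 1 := by
    nlinarith [hrec, ha]
  nlinarith [mul_nonneg hx0 (by linarith : 0 ≤ Sf m 1 + Sf m (j+1) - Sf m j
      - (2 - 2 * Real.cos (Real.pi / m)) * Sf m (j+1)),
    mul_nonneg (by linarith : (0:ℝ) ≤ 1 - x') (by linarith :
      0 ≤ Sf m 1 - Sf m (j+1) + Sf m j + (2 - 2 * Real.cos (Real.pi / m)) * Sf m (j+1))]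

/-- One-step invariance of the region below the top boundary of the invariant polygon band. -/
lemma step {m : ℕ} (hm : 2 ≤ m) {R x x' : ℝ}
    (hx0 : 0 ≤ x) (hx1 : x < 1) (hx'0 : 0 ≤ x') (hx'1 : x' < 1)
    {n : ℤ} (hn : x' = x - R + n)
    (hΩ : ∀ j, j < m - 1 → -(Sf m 1)/2 ≤ -(Sf m (j+1)) * R + (Sf m (j+1) - Sf m j) * (x - 1/2)) :
    ∀ j, j < m - 1 →
      -(Sf m 1)/2 ≤ -(Sf m (j+1)) * (R + (2 - 2 * Real.cos (Real.pi / m)) * (x' - 1/2))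
        + (Sf m (j+1) - Sf m j) * (x' - 1/2) := by
  have hΔ0 : 0 ≤ 2 - 2 * Real.cos (Real.pi / m) := by
    nlinarith [Real.cos_le_one (Real.pi / m)]
  by_cases hA : ∀ j, j < m - 1 →
      -(Sf m (j+1)) * R + (Sf m (j+1) - Sf m j) * (x - 1/2) ≤ (Sf m 1)/2
  · -- in-band case
    have h0m : 0 < m - 1 := by omega
    have hg0u := hA 0 h0m
    have hg0l := hΩ 0 h0m
    rw [Sf_zero] at hg0u hg0l
    have hS1 : 0 < Sf m 1 := Sf_pos hm Nat.one_pos (by omega)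
    -- |S₁ (x − 1/2 − R)| ≤ S₁/2  ⇒  0 ≤ x − R ≤ 1
    have hxR0 : 0 ≤ x - R := by nlinarith
    have hxR1 : x - R ≤ 1 := by nlinarith
    -- identify n
    have hn01 : n = 0 ∨ n = -1 := by
      have h1 : ((n:ℝ)) = x' - (x - R) := by linarith [hn]
      have h2 : (-2:ℝ) < n := by rw [h1]; linarith
      have h3 : ((n:ℝ)) < 1 := by rw [h1]; linarith
      have h2' : (-2:ℤ) < n := by exact_mod_cast h2
      have h3' : n < 1 := by exact_mod_cast h3
      omega
    rcases hn01 with hn0 | hn1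
    · -- main branch : x' = x - R
      have hx' : x' = x - R := by rw [hn, hn0]; push_cast; ring
      intro j hj
      have hrec := Sf_rec m j
      have hid : -(Sf m (j+1)) * (R + (2 - 2 * Real.cos (Real.pi / m)) * (x' - 1/2))
          + (Sf m (j+1) - Sf m j) * (x' - 1/2)
          = -(Sf m (j+2)) * R + (Sf m (j+2) - Sf m (j+1)) * (x - 1/2) := by
        rw [hx']
        linear_combination (R - x + 1/2) * hrec
      rw [hid]
      by_cases hjtop : j + 1 < m - 1
      · exact hΩ (j+1) hjtop
      · have hj2 : j + 2 = m := by omega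
        rw [show j + 2 = m from hj2, Sf_m_eq hm, Sf_pred hm hj2]
        have : -(0:ℝ) * R + (0 - Sf m 1) * (x - 1/2) = -(Sf m 1) * (x - 1/2) := by ring
        rw [this]
        nlinarith [hS1.le]
    · -- wrap branch : x - R = 1, x' = 0
      have hxR : x - R = 1 := by
        have : x' = x - R - 1 := by rw [hn, hn1]; push_cast; ring
        linarith
      have hx'z : x' = 0 := by
        have : x' = x - R - 1 := by rw [hn, hn1]; push_cast; ring
        linarith
      intro j hj
      have hSj1 : 0 ≤ Sf m (j+1) := Sf_nonneg hm (by omega)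
      have hc := Sf_ineq_c hm (j := j) (by omega)
      have hRneg : R + (2 - 2 * Real.cos (Real.pi / m)) * (x' - 1/2) ≤ 0 := by
        rw [hx'z]
        nlinarith
      nlinarith [mul_nonneg hSj1 (neg_nonneg.mpr hRneg)]
  · -- below-band case : R < 0
    push_neg at hA
    obtain ⟨j0, hj0, hj0gt⟩ := hA
    have hS1p : 0 < Sf m (j0+1) := Sf_pos hm (Nat.succ_pos j0) (by omega)
    have hb := affine_bound hm (j := j0) (by omega) hx0 hx1.le
    have hRneg : R < 0 := by
      have h1 : (Sf m (j0+1) - Sf m j0) * (x - 1/2) ≤ Sf m 1 / 2 := (abs_le.mp hb).2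
      nlinarith
    intro j hj
    have hSj1 : 0 ≤ Sf m (j+1) := Sf_nonneg hm (by omega)
    have hsb := slope_bound hm hj hx'0 hx'1.le
    nlinarith [mul_nonneg hSj1 (le_of_lt (neg_pos.mpr hRneg))]

end SawtoothAux

open SawtoothAux in
theorem stmt3 (m : ℕ) (hm : 2 ≤ m) (Δ : ℝ) (hΔ : Δ = 2 - 2 * Real.cos (Real.pi / m))
    (p : Cyl) :
    ¬ Tendsto (fun n : ℕ => ((sawtooth Δ)^[n] p).1) atTop atTop := by
  intro htend
  set k : ℤ := ⌈p.1⌉ with hk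
  set z : ℕ → Cyl := fun n => (sawtooth Δ)^[n] p with hz
  -- the invariant predicate
  set Good : Cyl → Prop := fun q => ∀ j, j < m - 1 →
      -(Sf m 1)/2 ≤ -(Sf m (j+1)) * (q.1 - k) + (Sf m (j+1) - Sf m j) * (rep q.2 - 1/2)
    with hGood
  have hG0 : Good p := by
    intro j hj
    have hSj1 : 0 ≤ Sf m (j+1) := Sf_nonneg hm (by omega)
    have hrm := rep_mem p.2
    have hb := affine_bound hm (j := j) (by omega) hrm.1 hrm.2.le
    have hRk : p.1 - k ≤ 0 := by
      have h : p.1 ≤ (k:ℝ) := by rw [hk]; exact Int.le_ceil p.1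
      linarith
    nlinarith [mul_nonneg hSj1 (neg_nonneg.mpr hRk), (abs_le.mp hb).1]
  have hGstep : ∀ q : Cyl, Good q → Good (sawtooth Δ q) := by
    intro q hq
    have hrm := rep_mem q.2
    have hrm' := rep_mem (q.2 - (q.1 : AddCircle (1:ℝ)))
    -- integer relation between rep q.2 and rep (q.2 - q.1)
    have hcoe : ((rep (q.2 - (q.1 : AddCircle (1:ℝ))) - rep q.2 + q.1 : ℝ) : AddCircle (1:ℝ)) = 0 := by
      rw [AddCircle.coe_add, AddCircle.coe_sub, rep_coe, rep_coe]
      abel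
    obtain ⟨i, hi⟩ := (AddCircle.coe_eq_zero_iff _).mp hcoe
    have hi' : rep (q.2 - (q.1 : AddCircle (1:ℝ)))
        = rep q.2 - (q.1 - k) + ((i - k : ℤ) : ℝ) := by
      have h : (i : ℝ) = rep (q.2 - (q.1 : AddCircle (1:ℝ))) - rep q.2 + q.1 := by
        simpa using hi
      push_cast
      linarith
    have hstep := step hm hrm.1 hrm.2 hrm'.1 hrm'.2 (n := i - k) hi' hq
    intro j hj
    have := hstep j hj
    have hfst : (sawtooth Δ q).1 - k
        = (q.1 - k) + (2 - 2 * Real.cos (Real.pi / m)) * (rep (q.2 - (q.1 : AddCircle (1:ℝ))) - 1/2) := by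
      simp only [sawtooth, hΔ]
      ring
    have hsnd : rep (sawtooth Δ q).2 = rep (q.2 - (q.1 : AddCircle (1:ℝ))) := rfl
    rw [hfst, hsnd]
    exact this
  have hGn : ∀ n, Good (z n) := by
    intro n
    induction n with
    | zero => simpa [hz] using hG0
    | succ n ih =>
        have : z (n+1) = sawtooth Δ (z n) := by
          simp [hz, Function.iterate_succ_apply']
        rw [this]
        exact hGstep _ ih
  -- Good forces R_n ≤ k + 1
  have hbound : ∀ n, (z n).1 ≤ k + 1 := by
    intro n
    have h := hGn n 0 (by omega)
    rw [Sf_zero] at h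
    have hS1 : 0 < Sf m 1 := Sf_pos hm Nat.one_pos (by omega)
    have hrm := rep_mem (z n).2
    nlinarith [hrm.2, hrm.1]
  obtain ⟨n, hn⟩ := (htend.eventually_ge_atTop ((k : ℝ) + 2)).exists
  have := hbound n
  simp only [hz] at this
  linarith

end
end

section
/- Let Δ ∈ (0, 4), s = √(Δ(4 − Δ)), α = arccos(1 − Δ/2) ∈ (0, π), and n ∈ ℤ. Define the affine map A_n : ℝ² → ℝ² by A_n(R, φ) = ((1 − Δ)R + Δφ + Δ(n − 1/2), −R + φ + n), the matrix M = [[2/s, −Δ/s], [0, 1]], and the point c_n = ((4n − Δ)/(2s), 1/2). Then: (i) for every (R, φ) ∈ ℝ² with n − 1 < R − φ < n, A_n(R, φ) is a lift of L_Δ(R, [φ]), i.e. L_Δ(R, [φ]) = (first coordinate of A_n(R, φ), class mod 1 of the second coordinate of A_n(R, φ)); (ii) for every v ∈ ℝ², M(A_n(v)) − c_n = Rot(−α)(M v − c_n), where Rot(−α) = [[cos α, sin α], [−sin α, cos α]] is the clockwise rotation by angle α. Thus M conjugates each branch of the sawtooth map to the clockwise rotation by α about the centre c_n. -/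
open MeasureTheory Filter

noncomputable section

theorem stmt4 (Δ : ℝ) (hΔ : Δ ∈ Set.Ioo (0 : ℝ) 4) (n : ℤ) :
    let s : ℝ := Real.sqrt (Δ * (4 - Δ))
    let α : ℝ := Real.arccos (1 - Δ / 2)
    let A : ℝ × ℝ → ℝ × ℝ := fun v =>
      ((1 - Δ) * v.1 + Δ * v.2 + Δ * ((n : ℝ) - 1 / 2), -v.1 + v.2 + (n : ℝ))
    let M : ℝ × ℝ → ℝ × ℝ := fun v => (2 / s * v.1 - Δ / s * v.2, v.2)
    let c : ℝ × ℝ := ((4 * (n : ℝ) - Δ) / (2 * s), 1 / 2)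
    α ∈ Set.Ioo (0 : ℝ) Real.pi ∧
    (∀ R φ : ℝ, (n : ℝ) - 1 < R - φ → R - φ < (n : ℝ) →
      sawtooth Δ (R, (φ : AddCircle (1 : ℝ))) =
        ((A (R, φ)).1, (((A (R, φ)).2 : ℝ) : AddCircle (1 : ℝ)))) ∧
    (∀ v : ℝ × ℝ, M (A v) - c =
      (Real.cos α * (M v - c).1 + Real.sin α * (M v - c).2,
        -Real.sin α * (M v - c).1 + Real.cos α * (M v - c).2)) := by
  obtain ⟨h0, h4⟩ := hΔ
  intro s α A M c
  have hs2 : s ^ 2 = Δ * (4 - Δ) := Real.sq_sqrt (by nlinarith)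
  have hs : 0 < s := Real.sqrt_pos.mpr (by nlinarith)
  have hmem : 1 - Δ / 2 ∈ Set.Ioo (-1 : ℝ) 1 := ⟨by linarith, by linarith⟩
  have hcos : Real.cos α = 1 - Δ / 2 :=
    Real.cos_arccos (by linarith) (by linarith)
  have hsin : Real.sin α = s / 2 := by
    have h1 : Real.sin α = Real.sqrt (1 - (1 - Δ / 2) ^ 2) := by
      rw [show α = Real.arccos (1 - Δ / 2) from rfl, Real.sin_arccos]
    rw [h1, show (1 : ℝ) - (1 - Δ / 2) ^ 2 = (Δ * (4 - Δ)) / 4 by ring,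
      show s = Real.sqrt (Δ * (4 - Δ)) from rfl]
    rw [show Δ * (4 - Δ) / 4 = (Real.sqrt (Δ * (4 - Δ)) / 2) ^ 2 by
      rw [div_pow, Real.sq_sqrt (by nlinarith)]; norm_num]
    exact Real.sqrt_sq (by positivity)
  refine ⟨⟨?_, ?_⟩, ?_, ?_⟩
  · rw [show α = Real.arccos (1 - Δ / 2) from rfl]
    have := Real.arccos_pos.mpr hmem.2
    exact this
  · rw [show α = Real.arccos (1 - Δ / 2) from rfl]
    exact lt_of_le_of_ne (Real.arccos_le_pi _)
      (fun h => absurd (Real.arccos_eq_pi.mp h) (by linarith [hmem.1]))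
  · intro R φ h1 h2
    have hrep : rep ((φ : AddCircle (1:ℝ)) - (R : AddCircle (1:ℝ))) = φ - R + n := by
      have : ((φ : AddCircle (1:ℝ)) - (R : AddCircle (1:ℝ))) = ((φ - R : ℝ) : AddCircle (1:ℝ)) := by
        norm_cast
      rw [this, rep, AddCircle.coe_equivIco_mk_apply]
      have hfl : ⌊φ - R⌋ = -n := by
        apply Int.floor_eq_iff.mpr
        constructor <;> push_cast <;> linarith
      rw [div_one, mul_one, Int.fract, hfl]
      push_cast; ring
    have hn0 : (((n : ℝ) : ℝ) : AddCircle (1:ℝ)) = 0 :=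
      (AddCircle.coe_eq_zero_iff 1).mpr ⟨n, by simp⟩
    have hcoe : ((φ : AddCircle (1:ℝ)) - (R : AddCircle (1:ℝ)))
        = ((-R + φ + (n : ℝ) : ℝ) : AddCircle (1:ℝ)) := by
      have h2 : ((-R + φ + (n : ℝ) : ℝ) : AddCircle (1:ℝ))
          = ((φ - R : ℝ) : AddCircle (1:ℝ)) + (((n : ℝ) : ℝ) : AddCircle (1:ℝ)) := by
        rw [show (-R + φ + (n:ℝ) : ℝ) = (φ - R) + ((n:ℝ) : ℝ) by ring]
        rfl
      rw [h2, hn0, add_zero]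
      norm_cast
    simp only [sawtooth, A, Prod.mk.injEq]
    constructor
    · rw [hrep]; ring
    · exact hcoe
  · intro v
    obtain ⟨R, φ⟩ := v
    have hsd : s / 2 = (4 * Δ - Δ ^ 2) / (2 * s) := by
      rw [div_eq_div_iff (by norm_num) (by positivity)]
      linear_combination 2 * hs2
    simp only [M, A, c, Prod.mk_sub_mk, Prod.mk.injEq, Prod.fst_sub, Prod.snd_sub]
    constructor
    · rw [hcos, hsin]
      field_simp
      linear_combination (1 - 2 * φ) * hs2
    · rw [hcos, hsin, hsd]
      field_simp
      linear_combination (2 * Δ * φ - Δ - 4 * R + 4 * (n : ℝ)) * hs2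
end
end

section
/- On [0, π/2], set Φ₁(θ) = 1 + sinθ, Φ₂(θ) = 1 − cosθ, a(θ) = −2cosθ, b(θ) = 2(1 + sinθ), a₁(θ) = 2sin²θ, and b₁(θ) = 4cosθ(1 + sinθ). Then Φ₂(0) = 0 and, for all θ ∈ (0, π/2), Φ₂′(θ)·b(θ) + a₁(θ)·Φ₁(θ) + Φ₁′(θ)·(a(θ)·b(θ) + b₁(θ)) + (1/2)·Φ₁″(θ)·b(θ)² = 0. -/
noncomputable section

theorem stmt16 :
    let Φ₁ : ℝ → ℝ := fun θ => 1 + Real.sin θ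
    let Φ₂ : ℝ → ℝ := fun θ => 1 - Real.cos θ
    let a : ℝ → ℝ := fun θ => -2 * Real.cos θ
    let b : ℝ → ℝ := fun θ => 2 * (1 + Real.sin θ)
    let a₁ : ℝ → ℝ := fun θ => 2 * Real.sin θ ^ 2
    let b₁ : ℝ → ℝ := fun θ => 4 * Real.cos θ * (1 + Real.sin θ)
    Φ₂ 0 = 0 ∧
    ∀ θ ∈ Set.Ioo (0 : ℝ) (Real.pi / 2),
      deriv Φ₂ θ * b θ + a₁ θ * Φ₁ θ + deriv Φ₁ θ * (a θ * b θ + b₁ θ)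
        + (1 / 2) * deriv (deriv Φ₁) θ * b θ ^ 2 = 0 := by
  intro Φ₁ Φ₂ a b a₁ b₁
  have h1 : deriv Φ₁ = fun θ => Real.cos θ := by
    ext θ; simp [Φ₁]
  have h2 : deriv Φ₂ = fun θ => Real.sin θ := by
    ext θ; simp [Φ₂]
  constructor
  · simp [Φ₂]
  · intro θ hθ
    rw [h1, h2]
    simp only [Φ₁, a, b, a₁, b₁, Real.deriv_cos]
    ring_nf
end
end
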